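/- arXiv:2203.00775 — 7 statements merged into one kernel-verified Lean document; each statement's English description precedes it below -/
import Mathlib

section
/- Let f : ℝ^d → ℝ be differentiable with L-Lipschitz gradient and convex (L > 0). If x₁ = x₀ - (h/L)·∇f(x₀) for some step size h ∈ (0,2), then ‖∇f(x₁)‖² ≤ ‖∇f(x₀)‖². More precisely, ‖∇f(x₀)‖² - ‖∇f(x₁)‖² ≥ ((2-h)/h)·‖∇f(x₀) - ∇f(x₁)‖². -/
/-!
Convexity (f lies above its tangent planes) and the L-Lipschitz gradient (f lies below the
tangent paraboloids of curvature L) combine into the cocoercivity inequality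
‖∇f x - ∇f y‖² / L ≤ ⟪∇f x - ∇f y, x - y⟫. Applied to x₀ and x₁ = x₀ - (h/L) ∇f x₀ it reads
‖g₀ - g₁‖² ≤ h ⟪g₀ - g₁, g₀⟫ with gᵢ = ∇f xᵢ, and the identity
‖g₀‖² - ‖g₁‖² = 2 ⟪g₀ - g₁, g₀⟫ - ‖g₀ - g₁‖² then gives the claim.
-/

open RealInnerProductSpace AffineMap Set

section

variable {E : Type*} [NormedAddCommGroup E] [InnerProductSpace ℝ E] [CompleteSpace E]
  {f : E → ℝ} {L : ℝ}

theorem hasDerivAt_comp_lineMap {x y : E} {t : ℝ} (hf : DifferentiableAt ℝ f (lineMap x y t)) :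
    HasDerivAt (fun s => f (lineMap x y s)) ⟪gradient f (lineMap x y t), y - x⟫ t :=
  (hasGradientAt_iff_hasFDerivAt.1 hf.hasGradientAt).comp_hasDerivAt t hasDerivAt_lineMap

theorem ConvexOn.add_inner_gradient_le (hconv : ConvexOn ℝ univ f) (hdiff : Differentiable ℝ f)
    (x y : E) : f x + ⟪gradient f x, y - x⟫ ≤ f y := by
  have hline : ConvexOn ℝ univ (fun s => f (lineMap x y s)) :=
    hconv.comp_affineMap (lineMap x y)
  have hderiv := hasDerivAt_comp_lineMap (t := 0) (hdiff (lineMap x y 0))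
  have := hline.le_slope_of_hasDerivAt (mem_univ 0) (mem_univ 1) one_pos hderiv
  simp only [lineMap_apply_zero, lineMap_apply_one, slope_def_field, sub_zero, div_one] at this
  linarith

theorem le_add_inner_gradient_add_sq (hdiff : Differentiable ℝ f)
    (hlip : ∀ x y, ‖gradient f x - gradient f y‖ ≤ L * ‖x - y‖) (x y : E) :
    f y ≤ f x + ⟪gradient f x, y - x⟫ + L / 2 * ‖y - x‖ ^ 2 := by
  set φ : ℝ → ℝ := fun t =>
    f (lineMap x y t) - t * ⟪gradient f x, y - x⟫ - L / 2 * ‖y - x‖ ^ 2 * t ^ 2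
  have hφ : ∀ t, HasDerivAt φ (⟪gradient f (lineMap x y t) - gradient f x, y - x⟫
      - L * ‖y - x‖ ^ 2 * t) t := by
    intro t
    have := (((hasDerivAt_comp_lineMap (x := x) (y := y) (hdiff _)).sub (hasDerivAt_mul_const
      ⟪gradient f x, y - x⟫)).sub ((hasDerivAt_pow 2 t).const_mul (L / 2 * ‖y - x‖ ^ 2)))
    exact this.congr_deriv (by rw [inner_sub_left]; push_cast; ring)
  have hanti : AntitoneOn φ (Icc 0 1) := by
    refine antitoneOn_of_hasDerivWithinAt_nonpos (convex_Icc 0 1)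
      (fun t _ => (hφ t).continuousAt.continuousWithinAt) (fun t _ => (hφ t).hasDerivWithinAt) ?_
    intro t ht
    rw [interior_Icc] at ht
    rw [sub_nonpos]
    have hdist : ‖lineMap x y t - x‖ = t * ‖y - x‖ := by
      rw [← dist_eq_norm, dist_lineMap_left, Real.norm_of_nonneg ht.1.le, dist_comm, dist_eq_norm]
    calc ⟪gradient f (lineMap x y t) - gradient f x, y - x⟫
        ≤ ‖gradient f (lineMap x y t) - gradient f x‖ * ‖y - x‖ := real_inner_le_norm _ _
      _ ≤ L * ‖lineMap x y t - x‖ * ‖y - x‖ := by gcongr; exact hlip _ _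
      _ = L * ‖y - x‖ ^ 2 * t := by rw [hdist]; ring
  have := hanti (left_mem_Icc.2 zero_le_one) (right_mem_Icc.2 zero_le_one) zero_le_one
  simp only [φ, lineMap_apply_zero, lineMap_apply_one] at this
  linarith

theorem ConvexOn.norm_sq_gradient_sub_div_le (hL : 0 < L) (hconv : ConvexOn ℝ univ f)
    (hdiff : Differentiable ℝ f) (hlip : ∀ x y, ‖gradient f x - gradient f y‖ ≤ L * ‖x - y‖)
    (x y : E) :
    ‖gradient f y - gradient f x‖ ^ 2 / (2 * L) ≤ f y - f x - ⟪gradient f x, y - x⟫ := by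
  set δ := gradient f y - gradient f x
  -- `z` is the gradient step from `y` for `f - ⟪∇f x, ·⟫`, a function minimised at `x`.
  set z := y - L⁻¹ • δ
  have hconvex := ConvexOn.add_inner_gradient_le hconv hdiff x z
  have hdescent := le_add_inner_gradient_add_sq hdiff hlip y z
  have hzy : z - y = -(L⁻¹ • δ) := by simp [z]
  have hzx : z - x = (y - x) - L⁻¹ • δ := by simp only [z]; abel
  rw [hzx, inner_sub_right, real_inner_smul_right] at hconvex
  rw [hzy, inner_neg_right, real_inner_smul_right, norm_neg, norm_smul, Real.norm_of_nonneg
    (inv_nonneg.2 hL.le)] at hdescent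
  have hδ : ⟪gradient f y, δ⟫ - ⟪gradient f x, δ⟫ = ‖δ‖ ^ 2 := by
    rw [← inner_sub_left, real_inner_self_eq_norm_sq]
  have hL' := hL.ne'
  have : ‖δ‖ ^ 2 / (2 * L)
      = L⁻¹ * (⟪gradient f y, δ⟫ - ⟪gradient f x, δ⟫) - L / 2 * (L⁻¹ * ‖δ‖) ^ 2 := by
    rw [hδ]; field_simp; ring
  linarith

theorem ConvexOn.norm_sq_gradient_sub_div_le_inner (hL : 0 < L) (hconv : ConvexOn ℝ univ f)
    (hdiff : Differentiable ℝ f) (hlip : ∀ x y, ‖gradient f x - gradient f y‖ ≤ L * ‖x - y‖)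
    (x y : E) :
    ‖gradient f x - gradient f y‖ ^ 2 / L ≤ ⟪gradient f x - gradient f y, x - y⟫ := by
  have hxy := hconv.norm_sq_gradient_sub_div_le hL hdiff hlip x y
  have hyx := hconv.norm_sq_gradient_sub_div_le hL hdiff hlip y x
  rw [norm_sub_rev] at hxy
  calc ‖gradient f x - gradient f y‖ ^ 2 / L
      = ‖gradient f x - gradient f y‖ ^ 2 / (2 * L)
        + ‖gradient f x - gradient f y‖ ^ 2 / (2 * L) := by ring
    _ ≤ (f y - f x - ⟪gradient f x, y - x⟫) + (f x - f y - ⟪gradient f y, x - y⟫) :=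
        add_le_add hxy hyx
    _ = ⟪gradient f x - gradient f y, x - y⟫ := by
        rw [inner_sub_left, ← neg_sub x y, inner_neg_right]; ring

end

theorem norm_sq_sub_norm_sq_ge_of_norm_sq_sub_le_inner {E : Type*} [NormedAddCommGroup E]
    [InnerProductSpace ℝ E] {a b : E} {h : ℝ} (hh : 0 < h) (hab : ‖a - b‖ ^ 2 ≤ h * ⟪a - b, a⟫) :
    (2 - h) / h * ‖a - b‖ ^ 2 ≤ ‖a‖ ^ 2 - ‖b‖ ^ 2 := by
  have hsplit : ‖a‖ ^ 2 - ‖b‖ ^ 2 = 2 * ⟪a - b, a⟫ - ‖a - b‖ ^ 2 := by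
    rw [norm_sub_sq_real, inner_sub_left, real_inner_self_eq_norm_sq, real_inner_comm]; ring
  rw [hsplit, div_mul_eq_mul_div, div_le_iff₀ hh]
  linarith

theorem stmt_0 {d : ℕ} (f : EuclideanSpace ℝ (Fin d) → ℝ) (L : ℝ) (hL : 0 < L)
    (hdiff : Differentiable ℝ f)
    (hconv : ConvexOn ℝ Set.univ f)
    (hlip : ∀ x y, ‖gradient f x - gradient f y‖ ≤ L * ‖x - y‖)
    (h : ℝ) (hh : h ∈ Set.Ioo (0:ℝ) 2)
    (x₀ x₁ : EuclideanSpace ℝ (Fin d))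
    (hstep : x₁ = x₀ - (h / L) • gradient f x₀) :
    ‖gradient f x₁‖ ^ 2 ≤ ‖gradient f x₀‖ ^ 2 ∧
    ‖gradient f x₀‖ ^ 2 - ‖gradient f x₁‖ ^ 2 ≥
      ((2 - h) / h) * ‖gradient f x₀ - gradient f x₁‖ ^ 2 := by
  obtain ⟨hh0, hh2⟩ := hh
  have hcoco := hconv.norm_sq_gradient_sub_div_le_inner hL hdiff hlip x₀ x₁
  rw [hstep, sub_sub_cancel, real_inner_smul_right, div_mul_eq_mul_div,
    div_le_div_iff_of_pos_right hL] at hcoco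
  have hgain := norm_sq_sub_norm_sq_ge_of_norm_sq_sub_le_inner hh0 hcoco
  rw [← hstep] at hgain
  refine ⟨?_, hgain⟩
  have : 0 ≤ (2 - h) / h * ‖gradient f x₀ - gradient f x₁‖ ^ 2 := by
    have := sub_pos.2 hh2; positivity
  linarith
end

section
/- Let f : ℝ^d → ℝ, let x₀, …, x_N ∈ ℝ^d and positive constants q, p₀, …, p_{N-1} satisfy: (a) min(‖∇f(x_i)‖², ‖∇f(x_{i+1})‖²) ≤ (f(x_i) - f(x_{i+1}))/p_i for all i, and (b) f(x_N) - f_* ≥ q·‖∇f(x_N)‖² where f_* ≤ f(x) for all x. Then min_{0 ≤ i ≤ N} ‖∇f(x_i)‖² ≤ (f(x₀) - f_*) / (q + ∑_{i=0}^{N-1} p_i). -/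
theorem stmt_4 {d : ℕ} (f : EuclideanSpace ℝ (Fin d) → ℝ)
    (N : ℕ) (hN : 1 ≤ N)
    (x : ℕ → EuclideanSpace ℝ (Fin d)) (p : ℕ → ℝ) (q : ℝ)
    (hp : ∀ i < N, 0 < p i) (hq : 0 < q)
    (fstar : ℝ) (hbdd : ∀ y, fstar ≤ f y)
    (hstep : ∀ i < N,
      min (‖gradient f (x i)‖ ^ 2) (‖gradient f (x (i + 1))‖ ^ 2) ≤
        (f (x i) - f (x (i + 1))) / p i)
    (hlast : f (x N) - fstar ≥ q * ‖gradient f (x N)‖ ^ 2) :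
    (Finset.range (N + 1)).inf' (by simp) (fun i => ‖gradient f (x i)‖ ^ 2) ≤
      (f (x 0) - fstar) / (q + ∑ i ∈ Finset.range N, p i) := by
  set g : ℕ → ℝ := fun i => ‖gradient f (x i)‖ ^ 2 with hg
  set m : ℝ := (Finset.range (N + 1)).inf' (by simp) g with hm
  have hmle : ∀ i ≤ N, m ≤ g i := fun i hi =>
    Finset.inf'_le _ (Finset.mem_range.mpr (Nat.lt_succ_of_le hi))
  have hsumpos : 0 < q + ∑ i ∈ Finset.range N, p i := by
    have : 0 < ∑ i ∈ Finset.range N, p i :=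
      Finset.sum_pos (fun i hi => hp i (Finset.mem_range.mp hi)) (Finset.nonempty_range_iff.mpr (by omega))
    linarith
  rw [le_div_iff₀ hsumpos]
  have hstep' : ∀ i < N, m * p i ≤ f (x i) - f (x (i + 1)) := by
    intro i hi
    have h1 : m ≤ (f (x i) - f (x (i + 1))) / p i := by
      refine le_trans ?_ (hstep i hi)
      exact le_min (hmle i hi.le) (hmle (i+1) hi)
    calc m * p i ≤ (f (x i) - f (x (i + 1))) / p i * p i :=
          mul_le_mul_of_nonneg_right h1 (hp i hi).le
      _ = f (x i) - f (x (i + 1)) := div_mul_cancel₀ _ (hp i hi).ne'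
  have hsum : m * ∑ i ∈ Finset.range N, p i ≤ f (x 0) - f (x N) := by
    rw [Finset.mul_sum]
    calc ∑ i ∈ Finset.range N, m * p i
        ≤ ∑ i ∈ Finset.range N, (f (x i) - f (x (i + 1))) :=
          Finset.sum_le_sum (fun i hi => hstep' i (Finset.mem_range.mp hi))
      _ = f (x 0) - f (x N) := by
          rw [← Finset.sum_range_sub' (fun i => f (x i))]
  have hlast' : m * q ≤ f (x N) - fstar := by
    calc m * q ≤ g N * q := mul_le_mul_of_nonneg_right (hmle N le_rfl) hq.le
      _ = q * g N := mul_comm _ _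
      _ ≤ f (x N) - fstar := hlast
  nlinarith [hsum, hlast']
end

section
/- Let L > 0, μ ≤ 0, κ = μ/L, and let f ∈ F_{μ,L}(ℝ^d) (smooth hypoconvex). Let x₁ = x₀ - (h/L)·∇f(x₀) with h ∈ (0,1]. Assuming the two interpolation inequalities f(x_i) - f(x_j) - ⟨∇f(x_j), x_i - x_j⟩ ≥ (1/(2(1-κ)))·((1/L)‖∇f(x_i)-∇f(x_j)‖² + μ‖x_i-x_j‖² - 2κ⟨∇f(x_j)-∇f(x_i), x_j-x_i⟩) hold for (i,j) = (0,1) and (1,0), one has min(‖∇f(x₀)‖², ‖∇f(x₁)‖²) ≤ 2L·(f(x₀) - f(x₁)) / (2h - h²·(-κ)/(1-κ)). -/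
open RealInnerProductSpace

set_option maxHeartbeats 1000000 in
theorem stmt_9 {d : ℕ} (f : EuclideanSpace ℝ (Fin d) → ℝ) (L μ κ : ℝ)
    (hL : 0 < L) (hμ : μ ≤ 0) (hκ : κ = μ / L)
    (hdiff : Differentiable ℝ f)
    (hupper : ConvexOn ℝ Set.univ (fun x => L / 2 * ‖x‖ ^ 2 - f x))
    (hlower : ConvexOn ℝ Set.univ (fun x => f x - μ / 2 * ‖x‖ ^ 2))
    (h : ℝ) (hh : h ∈ Set.Ioc (0:ℝ) 1)
    (x₀ x₁ : EuclideanSpace ℝ (Fin d))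
    (hstep : x₁ = x₀ - (h / L) • gradient f x₀)
    (hinterp01 : f x₀ - f x₁ - ⟪gradient f x₁, x₀ - x₁⟫ ≥
      (1 / (2 * (1 - κ))) * ((1 / L) * ‖gradient f x₀ - gradient f x₁‖ ^ 2 +
        μ * ‖x₀ - x₁‖ ^ 2 -
        2 * κ * ⟪gradient f x₁ - gradient f x₀, x₁ - x₀⟫))
    (hinterp10 : f x₁ - f x₀ - ⟪gradient f x₀, x₁ - x₀⟫ ≥
      (1 / (2 * (1 - κ))) * ((1 / L) * ‖gradient f x₁ - gradient f x₀‖ ^ 2 +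
        μ * ‖x₁ - x₀‖ ^ 2 -
        2 * κ * ⟪gradient f x₀ - gradient f x₁, x₀ - x₁⟫)) :
    min (‖gradient f x₀‖ ^ 2) (‖gradient f x₁‖ ^ 2) ≤
      2 * L * (f x₀ - f x₁) / (2 * h - h ^ 2 * (-κ) / (1 - κ)) := by
  obtain ⟨hh0, hh1⟩ := hh
  set g0 := gradient f x₀ with hg0
  set g1 := gradient f x₁ with hg1
  have hκ0 : κ ≤ 0 := by
    rw [hκ]; exact div_nonpos_of_nonpos_of_nonneg hμ hL.le
  have h1κ : (0:ℝ) < 1 - κ := by linarith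
  have hLne : L ≠ 0 := ne_of_gt hL
  have hμL : μ = κ * L := by rw [hκ]; field_simp
  have hx : x₀ - x₁ = (h / L) • g0 := by
    rw [hstep]; abel
  have hx' : x₁ - x₀ = -((h / L) • g0) := by
    rw [hstep]; abel
  have e1 : ⟪g1, x₀ - x₁⟫ = (h / L) * ⟪g0, g1⟫ := by
    rw [hx, real_inner_smul_right, real_inner_comm]
  have e2 : ‖x₀ - x₁‖ ^ 2 = (h / L) ^ 2 * ‖g0‖ ^ 2 := by
    rw [hx, norm_smul, Real.norm_eq_abs, mul_pow, sq_abs]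
  have e3 : ⟪g1 - g0, x₁ - x₀⟫ = -((h / L) * (⟪g0, g1⟫ - ‖g0‖ ^ 2)) := by
    rw [hx', inner_neg_right, real_inner_smul_right, inner_sub_left,
      real_inner_self_eq_norm_sq, real_inner_comm g1 g0]
  have e4 : ‖g0 - g1‖ ^ 2 = ‖g0‖ ^ 2 - 2 * ⟪g0, g1⟫ + ‖g1‖ ^ 2 := by
    rw [norm_sub_sq_real]
  rw [e1, e2, e3, e4, hμL] at hinterp01
  set a := ‖g0‖ ^ 2 with ha
  set b := ‖g1‖ ^ 2 with hb
  set c := ⟪g0, g1⟫ with hc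
  have hq : (0:ℝ) ≤ a - 2 * c + b := by
    rw [ha, hb, hc, ← norm_sub_sq_real]
    positivity
  -- clear denominators in hinterp01
  have H2 : 2 * h * (1 - κ) * c + ((a - 2 * c + b) + κ * h ^ 2 * a - 2 * κ * h * (a - c))
      ≤ 2 * L * (1 - κ) * (f x₀ - f x₁) := by
    rw [ge_iff_le] at hinterp01
    have h1' := mul_le_mul_of_nonneg_left hinterp01
      (show (0:ℝ) ≤ 2 * (1 - κ) * L by positivity)
    have hrw1 : 2 * (1 - κ) * L * (1 / (2 * (1 - κ)) *
        (1 / L * (a - 2 * c + b) + κ * L * ((h / L) ^ 2 * a) - 2 * κ * -(h / L * (c - a))))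
        = (a - 2 * c + b) + κ * h ^ 2 * a + 2 * κ * h * (c - a) := by
      field_simp
      ring
    have hrw2 : 2 * (1 - κ) * L * (f x₀ - f x₁ - h / L * c)
        = 2 * L * (1 - κ) * (f x₀ - f x₁) - 2 * h * (1 - κ) * c := by
      field_simp
    rw [hrw1, hrw2] at h1'
    linarith
  have hD : (0:ℝ) < 2 * h - h ^ 2 * (-κ) / (1 - κ) := by
    rw [sub_pos, div_lt_iff₀ h1κ]
    have hk : h * κ * (2 - h) ≤ 0 :=
      mul_nonpos_of_nonpos_of_nonneg
        (mul_nonpos_of_nonneg_of_nonpos hh0.le hκ0) (by linarith)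
    nlinarith [hk, hh0]
  rw [le_div_iff₀ hD]
  have hDval : (2 * h - h ^ 2 * (-κ) / (1 - κ)) * (1 - κ) = 2 * h * (1 - κ) + κ * h ^ 2 := by
    field_simp
    ring
  have hqh : (0:ℝ) ≤ (1 - h) * (a - 2 * c + b) :=
    mul_nonneg (by linarith) hq
  rcases le_total a b with hab | hab
  · rw [min_eq_left hab]
    have key : a * (2 * h - h ^ 2 * (-κ) / (1 - κ)) * (1 - κ)
        ≤ 2 * L * (f x₀ - f x₁) * (1 - κ) := by
      rw [mul_assoc, hDval]
      have h2 : (0:ℝ) ≤ h * (b - a) := mul_nonneg hh0.le (by linarith)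
      nlinarith [H2, hqh, h2]
    exact le_of_mul_le_mul_right key h1κ
  · rw [min_eq_right hab]
    have key : b * (2 * h - h ^ 2 * (-κ) / (1 - κ)) * (1 - κ)
        ≤ 2 * L * (f x₀ - f x₁) * (1 - κ) := by
      rw [mul_assoc, hDval]
      have hν : (0:ℝ) ≤ h * (1 - κ * (2 - h)) := by
        have : κ * (2 - h) ≤ 0 :=
          mul_nonpos_of_nonpos_of_nonneg hκ0 (by linarith)
        exact mul_nonneg hh0.le (by linarith)
      have h2 : (0:ℝ) ≤ (h * (1 - κ * (2 - h))) * (a - b) :=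
        mul_nonneg hν (by linarith)
      nlinarith [H2, hqh, h2]
    exact le_of_mul_le_mul_right key h1κ
end

section
/- Let L > 0, μ ≤ 0, κ = μ/L, and h ∈ [1, h̄(κ)] where h̄(κ) = 3/(1+κ+√(1-κ+κ²)). Let x₁ = x₀ - (h/L)g₀ with g₀ = ∇f(x₀), g₁ = ∇f(x₁). Assuming the two hypoconvex interpolation inequalities between (x₀,g₀,f₀) and (x₁,g₁,f₁) hold, then (h[κh² - 2h(1+κ) + 3]/(2L[2 - h(1+κ)]))·‖g₀‖² + (h/(2L[2 - h(1+κ)]))·‖g₁‖² ≤ f₀ - f₁, and consequently min(‖g₀‖², ‖g₁‖²) ≤ 2L(f₀ - f₁)·(2 - h(1+κ))/(h(2-h)(2-κh)). -/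
/-!
Clearing denominators, each interpolation inequality bounds the same quadratic form in
`(g₀ - g₁, L • (x₀ - x₁))` by a multiple of the function gap. Adding the `(0,1)`-inequality
weighted by `1 - κh` to the `(1,0)`-inequality weighted by `h - 1` (both weights are nonnegative
because `1 ≤ h` and `κ ≤ 0`) and substituting the gradient step `L • (x₀ - x₁) = h • g₀`, the
cross term `⟪g₀, g₁⟫` cancels, leaving a nonnegative combination of `‖g₀‖²` and `‖g₁‖²`.
The bound `h ≤ h̄(κ)` says exactly that `h` lies below the positive root of
`κh² - 2h(1 + κ) + 3`, so the coefficient of `‖g₀‖²` is nonnegative; the two coefficients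
sum to `h(2 - h)(2 - κh)`, which gives the bound on the minimum.
-/

open RealInnerProductSpace

noncomputable def hbar (κ : ℝ) : ℝ := 3 / (1 + κ + Real.sqrt (1 - κ + κ ^ 2))

lemma quadratic_nonneg_of_le_hbar {κ h : ℝ} (hκ : κ ≤ 0) (h0 : 0 ≤ h) (hh : h ≤ hbar κ) :
    0 ≤ κ * h ^ 2 - 2 * h * (1 + κ) + 3 := by
  set s := Real.sqrt (1 - κ + κ ^ 2)
  have hs : s ^ 2 = 1 - κ + κ ^ 2 := Real.sq_sqrt (by nlinarith)
  have hs0 : 0 ≤ s := Real.sqrt_nonneg _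
  have hpos : 0 < 1 + κ + s := by nlinarith [sq_nonneg (s + κ)]
  have hhs : h * s ≤ 3 - h * (1 + κ) := by
    rw [hbar, le_div_iff₀ hpos] at hh
    linarith
  -- square `h s ≤ 3 - h(1 + κ)` and use `s² = 1 - κ + κ²`
  nlinarith [mul_le_mul hhs hhs (mul_nonneg h0 hs0) (mul_nonneg h0 hs0 |>.trans hhs)]

lemma lt_two_of_quadratic_nonneg {κ h : ℝ} (hκ : κ ≤ 0)
    (hq : 0 ≤ κ * h ^ 2 - 2 * h * (1 + κ) + 3) : h < 2 := by
  by_contra! h2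
  nlinarith [mul_nonneg (mul_nonneg (neg_nonneg.mpr hκ) (by linarith : (0:ℝ) ≤ h))
    (sub_nonneg.mpr h2)]

lemma min_mul_add_le_mul_add_mul {α : Type*} [CommRing α] [LinearOrder α]
    [IsStrictOrderedRing α] {a b A B : α} (ha : 0 ≤ a) (hb : 0 ≤ b) :
    min A B * (a + b) ≤ a * A + b * B := by
  nlinarith [mul_le_mul_of_nonneg_left (min_le_left A B) ha,
    mul_le_mul_of_nonneg_left (min_le_right A B) hb]

section

variable {E : Type*} [NormedAddCommGroup E] [InnerProductSpace ℝ E]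

lemma hypoconvex_interp_smul {L μ κ fi fj : ℝ} {xi xj gi gj : E} (hL : 0 < L) (hκ : κ < 1)
    (hμ : μ = κ * L)
    (hI : fi - fj - ⟪gj, xi - xj⟫ ≥ (1 / (2 * (1 - κ))) * ((1 / L) * ‖gi - gj‖ ^ 2 +
        μ * ‖xi - xj‖ ^ 2 - 2 * κ * ⟪gj - gi, xj - xi⟫)) :
    ‖gi - gj‖ ^ 2 + κ * ‖L • (xi - xj)‖ ^ 2 - 2 * κ * ⟪gi - gj, L • (xi - xj)⟫ ≤
      2 * (1 - κ) * (L * (fi - fj) - ⟪gj, L • (xi - xj)⟫) := by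
  rw [← neg_sub gi, ← neg_sub xi, inner_neg_neg] at hI
  rw [norm_smul, real_inner_smul_right, real_inner_smul_right, mul_pow, Real.norm_eq_abs, sq_abs]
  have h1κ : 0 < 1 - κ := by linarith
  rw [ge_iff_le, mul_comm, ← div_eq_mul_one_div, div_le_iff₀ (by positivity), hμ] at hI
  have hIL := mul_le_mul_of_nonneg_left hI hL.le
  field_simp at hIL
  linarith

lemma gradient_step_bound {L μ κ h f₀ f₁ : ℝ} {x₀ x₁ g₀ g₁ : E} (hL : 0 < L) (hκ : κ ≤ 0)
    (hμ : μ = κ * L) (h1 : 1 ≤ h) (hstep : x₁ = x₀ - (h / L) • g₀)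
    (h01 : f₀ - f₁ - ⟪g₁, x₀ - x₁⟫ ≥ (1 / (2 * (1 - κ))) * ((1 / L) * ‖g₀ - g₁‖ ^ 2 +
        μ * ‖x₀ - x₁‖ ^ 2 - 2 * κ * ⟪g₁ - g₀, x₁ - x₀⟫))
    (h10 : f₁ - f₀ - ⟪g₀, x₁ - x₀⟫ ≥ (1 / (2 * (1 - κ))) * ((1 / L) * ‖g₁ - g₀‖ ^ 2 +
        μ * ‖x₁ - x₀‖ ^ 2 - 2 * κ * ⟪g₀ - g₁, x₀ - x₁⟫)) :
    h * (κ * h ^ 2 - 2 * h * (1 + κ) + 3) * ‖g₀‖ ^ 2 + h * ‖g₁‖ ^ 2 ≤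
      2 * L * (2 - h * (1 + κ)) * (f₀ - f₁) := by
  have hκ1 : κ < 1 := by linarith
  have hd : L • (x₀ - x₁) = h • g₀ := by
    rw [hstep, sub_sub_cancel, smul_smul, mul_div_cancel₀ _ hL.ne']
  have hd' : L • (x₁ - x₀) = -(h • g₀) := by rw [← neg_sub, smul_neg, hd]
  have I01 := hypoconvex_interp_smul hL hκ1 hμ h01
  have I10 := hypoconvex_interp_smul hL hκ1 hμ h10
  rw [hd] at I01
  rw [hd'] at I10
  simp only [norm_neg, norm_smul, inner_neg_right, real_inner_smul_right, inner_sub_left,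
    norm_sub_sq_real, real_inner_self_eq_norm_sq, real_inner_comm g₀ g₁, mul_pow,
    Real.norm_eq_abs, sq_abs] at I01 I10
  have hcomb := add_le_add (mul_le_mul_of_nonneg_left I01 (by nlinarith : 0 ≤ 1 - κ * h))
    (mul_le_mul_of_nonneg_left I10 (sub_nonneg.mpr h1))
  have hgap : 0 ≤ (1 - κ) * (2 * L * (2 - h * (1 + κ)) * (f₀ - f₁) -
      (h * (κ * h ^ 2 - 2 * h * (1 + κ) + 3) * ‖g₀‖ ^ 2 + h * ‖g₁‖ ^ 2)) := by
    linear_combination hcomb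
  exact sub_nonneg.mp (nonneg_of_mul_nonneg_right hgap (by linarith))

end

theorem stmt_10 {d : ℕ} (f : EuclideanSpace ℝ (Fin d) → ℝ) (L μ κ : ℝ)
    (hL : 0 < L) (hμ : μ ≤ 0) (hκ : κ = μ / L)
    (h : ℝ) (hh : h ∈ Set.Icc 1 (hbar κ))
    (x₀ x₁ : EuclideanSpace ℝ (Fin d))
    (hstep : x₁ = x₀ - (h / L) • gradient f x₀)
    (hinterp01 : f x₀ - f x₁ - ⟪gradient f x₁, x₀ - x₁⟫ ≥
      (1 / (2 * (1 - κ))) * ((1 / L) * ‖gradient f x₀ - gradient f x₁‖ ^ 2 +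
        μ * ‖x₀ - x₁‖ ^ 2 -
        2 * κ * ⟪gradient f x₁ - gradient f x₀, x₁ - x₀⟫))
    (hinterp10 : f x₁ - f x₀ - ⟪gradient f x₀, x₁ - x₀⟫ ≥
      (1 / (2 * (1 - κ))) * ((1 / L) * ‖gradient f x₁ - gradient f x₀‖ ^ 2 +
        μ * ‖x₁ - x₀‖ ^ 2 -
        2 * κ * ⟪gradient f x₀ - gradient f x₁, x₀ - x₁⟫)) :
    (h * (κ * h ^ 2 - 2 * h * (1 + κ) + 3) / (2 * L * (2 - h * (1 + κ)))) *
        ‖gradient f x₀‖ ^ 2 +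
      (h / (2 * L * (2 - h * (1 + κ)))) * ‖gradient f x₁‖ ^ 2 ≤ f x₀ - f x₁ ∧
    min (‖gradient f x₀‖ ^ 2) (‖gradient f x₁‖ ^ 2) ≤
      2 * L * (f x₀ - f x₁) * (2 - h * (1 + κ)) / (h * (2 - h) * (2 - κ * h)) := by
  obtain ⟨h1, hhbar⟩ := hh
  have hκ0 : κ ≤ 0 := hκ ▸ div_nonpos_of_nonpos_of_nonneg hμ hL.le
  have hμL : μ = κ * L := by rw [hκ, div_mul_cancel₀ μ hL.ne']
  have h0 : 0 < h := by linarith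
  have hq := quadratic_nonneg_of_le_hbar hκ0 h0.le hhbar
  have h2 := lt_two_of_quadratic_nonneg hκ0 hq
  have hD : 0 < 2 - h * (1 + κ) := by nlinarith
  have hbound := gradient_step_bound hL hκ0 hμL h1 hstep hinterp01 hinterp10
  constructor
  · rw [div_mul_eq_mul_div, div_mul_eq_mul_div, ← add_div, div_le_iff₀ (by positivity)]
    linarith
  · have hden : 0 < h * (2 - h) * (2 - κ * h) :=
      mul_pos (mul_pos h0 (sub_pos.mpr h2)) (by nlinarith)
    rw [le_div_iff₀ hden]
    have hsum : h * (2 - h) * (2 - κ * h) = h * (κ * h ^ 2 - 2 * h * (1 + κ) + 3) + h := by ring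
    rw [hsum]
    linarith [min_mul_add_le_mul_add_mul (A := ‖gradient f x₀‖ ^ 2) (B := ‖gradient f x₁‖ ^ 2)
      (mul_nonneg h0.le hq) h0.le]
end

section
/- For κ ≤ 0, max_{h ∈ (0,1]} (2h - h²(-κ)/(1-κ)) = 2 - (-κ)/(1-κ), attained at h = 1, and this value is at most max_{h ∈ [1, h̄(κ)]} (2h + κh³/(2-(1+κ)h)). Hence the optimal constant step size maximizing p(h,κ) over (0, h̄(κ)] lies in [1, h̄(κ)]. -/
theorem stmt_13 (κ : ℝ) (hκ : κ ≤ 0) :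
    IsMaxOn (fun h : ℝ => 2 * h - h ^ 2 * (-κ) / (1 - κ)) (Set.Ioc 0 1) 1 ∧
    2 * 1 - 1 ^ 2 * (-κ) / (1 - κ) = 2 - (-κ) / (1 - κ) ∧
    ∃ h ∈ Set.Icc 1 (hbar κ),
      2 - (-κ) / (1 - κ) ≤ 2 * h + κ * h ^ 3 / (2 - (1 + κ) * h) := by
  have h1κ : (0:ℝ) < 1 - κ := by linarith
  have hs : Real.sqrt (1 - κ + κ ^ 2) ≤ 2 - κ := by
    rw [show (2:ℝ) - κ = Real.sqrt ((2 - κ)^2) by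
      rw [Real.sqrt_sq (by linarith)]]
    exact Real.sqrt_le_sqrt (by nlinarith)
  have hs0 : 0 < 1 + κ + Real.sqrt (1 - κ + κ ^ 2) := by
    rcases lt_or_ge (-(1+κ)) 0 with h | h
    · have := Real.sqrt_nonneg (1 - κ + κ ^ 2); linarith
    · have : -(1+κ) < Real.sqrt (1 - κ + κ ^ 2) := by
        rcases eq_or_lt_of_le hκ with rfl | hlt
        · simp at h; linarith [Real.sqrt_nonneg (1 - 0 + (0:ℝ) ^ 2)]
        · exact (Real.lt_sqrt h).2 (by nlinarith)
      linarith
  have hbar1 : 1 ≤ hbar κ := by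
    rw [hbar, le_div_iff₀ hs0]; linarith
  refine ⟨?_, by ring, 1, ⟨le_refl 1, hbar1⟩, by
    rw [show 2 - (1+κ)*1 = 1 - κ by ring]
    rw [neg_div, sub_neg_eq_add]
    ring_nf
    exact le_rfl⟩
  intro h hh
  simp only [Set.mem_Ioc] at hh
  simp only [Set.mem_setOf_eq]
  rw [mul_neg, mul_neg, neg_div, neg_div, sub_neg_eq_add, sub_neg_eq_add,
    mul_div_assoc, mul_div_assoc]
  have hc0 : κ / (1 - κ) ≤ 0 := div_nonpos_of_nonpos_of_nonneg hκ h1κ.le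
  have hc1 : -1 ≤ κ / (1 - κ) := by rw [le_div_iff₀ h1κ]; linarith
  nlinarith [hh.1, hh.2, mul_nonneg (neg_nonneg.2 hκ) (sq_nonneg (1 - h))]
end

section
/- For κ < 0, the function c(h) = 2h + κh³/(2 - (1+κ)h) is strictly concave on [1, 2), and its derivative (after clearing the positive factor (2-(1+κ)h)²) is proportional to P(h) = -κ(1+κ)h³ + [3κ + (1+κ)²]h² - 4(1+κ)h + 4. Since P(1) = 1 > 0 and P(2) = 4κ(1-κ) < 0, the equation P(h) = 0 has a unique root in [1, 2). -/
/-!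
Write `c = rateCoeff κ`, `P = rateCoeffDerivNumer κ` and `D(h) = 2 - (1 + κ) h`, which is
positive on `[0, 2)` when `κ ≤ 0`. The quotient rule gives `c' = 2 P / D²` and then
`c'' = 2 κ h ((1 + κ)² h² - 6 (1 + κ) h + 12) / D³`, whose quadratic factor is
`((1 + κ) h - 3)² + 3 > 0`; so `c'' < 0` on `(0, 2)` when `κ < 0`.
Moreover `P'(h) = κ² h (2 - 3h) + κ (-3h² + 10h - 4) + 2 (h - 2) < 0` on `(1, 2)`, so `P` is
strictly decreasing on `[1, 2]` and has exactly one zero between `P 1 = 1` and `P 2 < 0`.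
-/

open Set

noncomputable section

def rateCoeff (κ h : ℝ) : ℝ := 2 * h + κ * h ^ 3 / (2 - (1 + κ) * h)

def rateCoeffDerivNumer (κ h : ℝ) : ℝ :=
  -κ * (1 + κ) * h ^ 3 + (3 * κ + (1 + κ) ^ 2) * h ^ 2 - 4 * (1 + κ) * h + 4

end

lemma rateCoeff_denom_pos {κ h : ℝ} (hκ : κ ≤ 0) (h0 : 0 ≤ h) (h2 : h < 2) :
    0 < 2 - (1 + κ) * h := by
  nlinarith [mul_nonpos_of_nonpos_of_nonneg hκ h0]

lemma hasDerivAt_rateCoeffDerivNumer (κ x : ℝ) :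
    HasDerivAt (rateCoeffDerivNumer κ)
      (κ ^ 2 * x * (2 - 3 * x) + κ * (-3 * x ^ 2 + 10 * x - 4) + 2 * (x - 2)) x := by
  have := ((((hasDerivAt_pow 3 x).const_mul (-κ * (1 + κ))).add
    ((hasDerivAt_pow 2 x).const_mul (3 * κ + (1 + κ) ^ 2))).sub
    ((hasDerivAt_id' x).const_mul (4 * (1 + κ)))).add_const 4
  exact this.congr_deriv (by push_cast; ring)

lemma hasDerivAt_rateCoeff {κ x : ℝ} (hx : 2 - (1 + κ) * x ≠ 0) :
    HasDerivAt (rateCoeff κ) (2 * rateCoeffDerivNumer κ x / (2 - (1 + κ) * x) ^ 2) x := by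
  have hden : HasDerivAt (fun h : ℝ => 2 - (1 + κ) * h) (-(1 + κ)) x := by
    simpa using ((hasDerivAt_id' x).const_mul (1 + κ)).const_sub 2
  have := ((hasDerivAt_id' x).const_mul 2).add
    (((hasDerivAt_pow 3 x).const_mul κ).div hden hx)
  refine this.congr_deriv ?_
  simp only [rateCoeffDerivNumer]
  field_simp
  ring

lemma hasDerivAt_deriv_rateCoeff {κ x : ℝ} (hx : 2 - (1 + κ) * x ≠ 0) :
    HasDerivAt (fun h => 2 * rateCoeffDerivNumer κ h / (2 - (1 + κ) * h) ^ 2)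
      (2 * κ * x * ((1 + κ) ^ 2 * x ^ 2 - 6 * (1 + κ) * x + 12) / (2 - (1 + κ) * x) ^ 3) x := by
  have hden : HasDerivAt (fun h : ℝ => (2 - (1 + κ) * h) ^ 2)
      (2 * (2 - (1 + κ) * x) * (-(1 + κ))) x := by
    have := (((hasDerivAt_id' x).const_mul (1 + κ)).const_sub 2).pow 2
    exact this.congr_deriv (by push_cast; ring)
  have := ((hasDerivAt_rateCoeffDerivNumer κ x).const_mul 2).div hden (pow_ne_zero 2 hx)
  refine this.congr_deriv ?_
  simp only [rateCoeffDerivNumer]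
  field_simp
  ring

lemma deriv_rateCoeff_mul_sq {κ x : ℝ} (hx : 2 - (1 + κ) * x ≠ 0) :
    deriv (rateCoeff κ) x * (2 - (1 + κ) * x) ^ 2 = 2 * rateCoeffDerivNumer κ x := by
  rw [(hasDerivAt_rateCoeff hx).deriv, div_mul_cancel₀ _ (pow_ne_zero 2 hx)]

lemma strictAntiOn_deriv_rateCoeff {κ : ℝ} (hκ : κ < 0) :
    StrictAntiOn (deriv (rateCoeff κ)) (Ioo 0 2) := by
  have hD : ∀ x ∈ Ioo (0 : ℝ) 2, 0 < 2 - (1 + κ) * x := fun x hx =>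
    rateCoeff_denom_pos hκ.le hx.1.le hx.2
  have hneg : ∀ x ∈ Ioo (0 : ℝ) 2,
      2 * κ * x * ((1 + κ) ^ 2 * x ^ 2 - 6 * (1 + κ) * x + 12) / (2 - (1 + κ) * x) ^ 3 < 0 := by
    intro x hx
    have hq : 0 < (1 + κ) ^ 2 * x ^ 2 - 6 * (1 + κ) * x + 12 := by
      nlinarith [sq_nonneg ((1 + κ) * x - 3)]
    refine div_neg_of_neg_of_pos ?_ (pow_pos (hD x hx) 3)
    exact mul_neg_of_neg_of_pos (mul_neg_of_neg_of_pos (by linarith) hx.1) hq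
  have hanti : StrictAntiOn (fun h => 2 * rateCoeffDerivNumer κ h / (2 - (1 + κ) * h) ^ 2)
      (Ioo 0 2) :=
    strictAntiOn_of_hasDerivWithinAt_neg (convex_Ioo 0 2)
      (fun x hx => (hasDerivAt_deriv_rateCoeff (hD x hx).ne').continuousAt.continuousWithinAt)
      (fun x hx => (hasDerivAt_deriv_rateCoeff (hD x (interior_subset hx)).ne').hasDerivWithinAt)
      (fun x hx => hneg x (interior_subset hx))
  exact hanti.congr fun x hx => ((hasDerivAt_rateCoeff (hD x hx).ne').deriv).symm

lemma strictConcaveOn_rateCoeff {κ : ℝ} (hκ : κ < 0) :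
    StrictConcaveOn ℝ (Ico 0 2) (rateCoeff κ) := by
  refine StrictAntiOn.strictConcaveOn_of_deriv (convex_Ico 0 2) (fun x hx => ?_)
    (by simpa only [interior_Ico] using strictAntiOn_deriv_rateCoeff hκ)
  exact (hasDerivAt_rateCoeff (rateCoeff_denom_pos hκ.le hx.1 hx.2).ne').continuousAt
    |>.continuousWithinAt

lemma rateCoeffDerivNumer_one (κ : ℝ) : rateCoeffDerivNumer κ 1 = 1 := by
  unfold rateCoeffDerivNumer; ring

lemma rateCoeffDerivNumer_two (κ : ℝ) : rateCoeffDerivNumer κ 2 = 4 * κ * (1 - κ) := by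
  unfold rateCoeffDerivNumer; ring

lemma strictAntiOn_rateCoeffDerivNumer {κ : ℝ} (hκ : κ ≤ 0) :
    StrictAntiOn (rateCoeffDerivNumer κ) (Icc 1 2) := by
  refine strictAntiOn_of_hasDerivWithinAt_neg (convex_Icc 1 2)
    (fun x _ => (hasDerivAt_rateCoeffDerivNumer κ x).continuousAt.continuousWithinAt)
    (fun x _ => (hasDerivAt_rateCoeffDerivNumer κ x).hasDerivWithinAt) ?_
  rw [interior_Icc]
  rintro x ⟨h1, h2⟩
  have hquad : 0 ≤ -3 * x ^ 2 + 10 * x - 4 := by nlinarith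
  nlinarith [mul_nonneg (sq_nonneg κ) (by nlinarith : 0 ≤ x * (3 * x - 2)),
    mul_nonpos_of_nonpos_of_nonneg hκ hquad]

lemma existsUnique_mem_Ico_eq_zero_of_strictAntiOn {f : ℝ → ℝ} {a b : ℝ} (hab : a ≤ b)
    (hf : ContinuousOn f (Icc a b)) (hanti : StrictAntiOn f (Icc a b))
    (ha : 0 ≤ f a) (hb : f b < 0) : ∃! x, x ∈ Ico a b ∧ f x = 0 := by
  obtain ⟨c, hc, hfc⟩ := intermediate_value_Ico' hab hf ⟨hb, ha⟩
  refine ⟨c, ⟨hc, hfc⟩, fun y ⟨hy, hfy⟩ => ?_⟩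
  exact hanti.injOn (Ico_subset_Icc_self hy) (Ico_subset_Icc_self hc) (hfy.trans hfc.symm)

lemma existsUnique_rateCoeffDerivNumer_eq_zero {κ : ℝ} (hκ : κ < 0) :
    ∃! h, h ∈ Ico (1 : ℝ) 2 ∧ rateCoeffDerivNumer κ h = 0 := by
  refine existsUnique_mem_Ico_eq_zero_of_strictAntiOn one_le_two
    (fun x _ => (hasDerivAt_rateCoeffDerivNumer κ x).continuousAt.continuousWithinAt)
    (strictAntiOn_rateCoeffDerivNumer hκ.le) (by rw [rateCoeffDerivNumer_one]; exact zero_le_one)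
    (by rw [rateCoeffDerivNumer_two]; exact mul_neg_of_neg_of_pos (by linarith) (by linarith))

theorem stmt_14 (κ : ℝ) (hκ : κ < 0) :
    StrictConcaveOn ℝ (Set.Ico (1:ℝ) 2)
      (fun h => 2 * h + κ * h ^ 3 / (2 - (1 + κ) * h)) ∧
    (∀ h ∈ Set.Ico (1:ℝ) 2,
      deriv (fun h => 2 * h + κ * h ^ 3 / (2 - (1 + κ) * h)) h *
          (2 - (1 + κ) * h) ^ 2 =
        2 * (-κ * (1 + κ) * h ^ 3 + (3 * κ + (1 + κ) ^ 2) * h ^ 2 -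
          4 * (1 + κ) * h + 4)) ∧
    (-κ * (1 + κ) * 1 ^ 3 + (3 * κ + (1 + κ) ^ 2) * 1 ^ 2 - 4 * (1 + κ) * 1 + 4 = 1) ∧
    (-κ * (1 + κ) * 2 ^ 3 + (3 * κ + (1 + κ) ^ 2) * 2 ^ 2 - 4 * (1 + κ) * 2 + 4 =
      4 * κ * (1 - κ)) ∧
    (4 * κ * (1 - κ) < 0) ∧
    (∃! h : ℝ, h ∈ Set.Ico (1:ℝ) 2 ∧
      -κ * (1 + κ) * h ^ 3 + (3 * κ + (1 + κ) ^ 2) * h ^ 2 -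
        4 * (1 + κ) * h + 4 = 0) :=
  ⟨(strictConcaveOn_rateCoeff hκ).subset (Ico_subset_Ico_left zero_le_one) (convex_Ico 1 2),
    fun _ hh => deriv_rateCoeff_mul_sq (rateCoeff_denom_pos hκ.le (by linarith [hh.1]) hh.2).ne',
    rateCoeffDerivNumer_one κ, rateCoeffDerivNumer_two κ,
    mul_neg_of_neg_of_pos (by linarith) (by linarith),
    existsUnique_rateCoeffDerivNumer_eq_zero hκ⟩
end

section
/- Let L > 0, N ≥ 1, Δ > 0, κ ≤ 0, and step sizes h_i ∈ (0,1]. Define U = √(2LΔ / ∑_{i=0}^{N-1} h_i(2 - h_i(-κ)/(1-κ))), and the one-dimensional piecewise-quadratic function f built from quadratic pieces of curvature alternating between μ = κL and L as in the tightness construction (pieces: (L/2)(x + U/L)² - U²/(2L) on (-∞, x_N]; (μ/2)(x-x_{i+1})² + U(x-x_{i+1}) + f_{i+1} on [x_{i+1}, x̄_i]; (L/2)(x-x_i)² + U(x-x_i) + f_i on [x̄_i, x_i]; and (L/2)(x-x₀)² + U(x-x₀) + f₀ on [x₀,∞)), where x_i = (U/L)∑_{j=i}^{N-1} h_j, f_i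 = Δ - (U²/(2L))∑_{j=0}^{i-1} h_j(2 - h_j(-κ)/(1-κ)), and x̄_i = x_i - ((-κ)/(1-κ))(h_i/L)U. Then f is continuously differentiable, f(x_i) = f_i, f'(x_i) = U for all i = 0,…,N, and the gradient iteration x_{i+1} = x_i - (h_i/L)f'(x_i) holds; consequently min_i |f'(x_i)|² = U² = 2L(f(x₀)-f(x_N)) / ∑_{i=0}^{N-1} h_i(2 - h_i(-κ)/(1-κ)), showing the short-step rate is tight. -/
/-!
The derivative of the worst-case function is the continuous piecewise-linear function that equals
`U` at every node `x i`, has slope `L` outside `[x N, x 0]`, and on each `[x (i+1), x i]` dips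
below `U` with slope `μ` and climbs back with slope `L`, the two lines meeting at `x̄ i`. Its
antiderivative is `C¹`, quadratic on every piece, and its drop between consecutive nodes, read off
at `x̄ i` from the two quadratics, is `U² / (2L) · hᵢ (2 - hᵢ (-κ) / (1 - κ))`; these drops
telescope to the values `fᵢ`, and they add up to `Δ` by the choice of `U`.
-/

open Set Finset

lemma hasDerivAt_quadratic (A B C x₀ y : ℝ) :
    HasDerivAt (fun z => A / 2 * (z - x₀) ^ 2 + B * (z - x₀) + C) (A * (y - x₀) + B) y := by
  have hz : HasDerivAt (fun z : ℝ => z - x₀) 1 y := (hasDerivAt_id y).sub_const x₀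
  exact ((((hz.pow 2).const_mul (A / 2)).add (hz.const_mul B)).add_const C).congr_deriv (by ring)

lemma sub_eq_sub_of_hasDerivAt_uIcc {f g f' : ℝ → ℝ} {a b : ℝ}
    (hf : ∀ t ∈ uIcc a b, HasDerivAt f (f' t) t) (hg : ∀ t ∈ uIcc a b, HasDerivAt g (f' t) t)
    (hint : IntervalIntegrable f' MeasureTheory.volume a b) : f b - f a = g b - g a := by
  rw [← intervalIntegral.integral_eq_sub_of_hasDerivAt hf hint,
    intervalIntegral.integral_eq_sub_of_hasDerivAt hg hint]

lemma max_mul_sub_eq_left {μ L a b c y : ℝ} (hμL : μ ≤ L) (hc : μ * (c - a) = L * (c - b))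
    (hy : y ≤ c) : max (μ * (y - a)) (L * (y - b)) = μ * (y - a) :=
  max_eq_left (by nlinarith [mul_nonneg (sub_nonneg.2 hμL) (sub_nonneg.2 hy)])

lemma max_mul_sub_eq_right {μ L a b c y : ℝ} (hμL : μ ≤ L) (hc : μ * (c - a) = L * (c - b))
    (hy : c ≤ y) : max (μ * (y - a)) (L * (y - b)) = L * (y - b) :=
  max_eq_right (by nlinarith [mul_nonneg (sub_nonneg.2 hμL) (sub_nonneg.2 hy)])

lemma eq_of_sub_succ_eq {a b : ℕ → ℝ} {N : ℕ} (hN : a N = b N)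
    (hstep : ∀ i < N, a i - a (i + 1) = b i - b (i + 1)) {i : ℕ} (hi : i ≤ N) : a i = b i := by
  induction hi using Nat.decreasingInduction with
  | self => exact hN
  | of_succ k hk ih => linarith [hstep k hk]

lemma antitone_sum_Ico {N : ℕ} {h : ℕ → ℝ} (hh : ∀ i < N, 0 ≤ h i) :
    Antitone fun i => ∑ j ∈ Ico i N, h j :=
  fun _ _ hij => sum_le_sum_of_subset_of_nonneg (Ico_subset_Ico hij le_rfl)
    fun k hk _ => hh k (mem_Ico.1 hk).2

def notch (μ L a b y : ℝ) : ℝ := min 0 (max (μ * (y - a)) (L * (y - b)))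

section Notch

variable {μ L a b y : ℝ}

@[fun_prop]
lemma continuous_notch : Continuous (notch μ L a b) := by
  unfold notch
  fun_prop

lemma notch_of_le (hμ : μ ≤ 0) (hy : y ≤ a) : notch μ L a b y = 0 :=
  min_eq_left (le_max_of_le_left (mul_nonneg_of_nonpos_of_nonpos hμ (by linarith)))

lemma notch_of_ge (hL : 0 ≤ L) (hy : b ≤ y) : notch μ L a b y = 0 :=
  min_eq_left (le_max_of_le_right (mul_nonneg hL (by linarith)))

lemma notch_of_mem_Icc (hμ : μ ≤ 0) (hL : 0 ≤ L) (hy : y ∈ Icc a b) :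
    notch μ L a b y = max (μ * (y - a)) (L * (y - b)) :=
  min_eq_right (max_le (mul_nonpos_of_nonpos_of_nonneg hμ (by linarith [hy.1]))
    (mul_nonpos_of_nonneg_of_nonpos hL (by linarith [hy.2])))

end Notch

def worstCaseDeriv (L μ U : ℝ) (N : ℕ) (x : ℕ → ℝ) (y : ℝ) : ℝ :=
  U + L * min (y - x N) 0 + L * max (y - x 0) 0 + ∑ i ∈ range N, notch μ L (x (i + 1)) (x i) y

noncomputable def worstCase (L μ U : ℝ) (N : ℕ) (x : ℕ → ℝ) (y : ℝ) : ℝ :=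
  ∫ t in (0 : ℝ)..y, worstCaseDeriv L μ U N x t

section WorstCase

variable {L μ U : ℝ} {N : ℕ} {x : ℕ → ℝ}

lemma continuous_worstCaseDeriv : Continuous (worstCaseDeriv L μ U N x) := by
  unfold worstCaseDeriv
  fun_prop

lemma hasDerivAt_worstCase (y : ℝ) :
    HasDerivAt (worstCase L μ U N x) (worstCaseDeriv L μ U N x y) y :=
  (continuous_worstCaseDeriv.integral_hasStrictDerivAt 0 y).hasDerivAt

lemma deriv_worstCase : deriv (worstCase L μ U N x) = worstCaseDeriv L μ U N x :=
  funext fun y => (hasDerivAt_worstCase y).deriv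

lemma contDiff_worstCase : ContDiff ℝ 1 (worstCase L μ U N x) :=
  contDiff_one_iff_deriv.2 ⟨fun y => (hasDerivAt_worstCase y).differentiableAt,
    deriv_worstCase (x := x) ▸ continuous_worstCaseDeriv⟩

lemma worstCase_zero : worstCase L μ U N x 0 = 0 :=
  intervalIntegral.integral_same

lemma worstCase_eq_quadratic {A x₀ y : ℝ}
    (hA : ∀ t ∈ uIcc x₀ y, worstCaseDeriv L μ U N x t = A * (t - x₀) + U) :
    worstCase L μ U N x y = A / 2 * (y - x₀) ^ 2 + U * (y - x₀) + worstCase L μ U N x x₀ := by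
  have := sub_eq_sub_of_hasDerivAt_uIcc (fun t _ => hasDerivAt_worstCase t)
    (fun t ht => hA t ht ▸ hasDerivAt_quadratic A U 0 x₀ t)
    (continuous_worstCaseDeriv.intervalIntegrable x₀ y)
  linarith

lemma worstCaseDeriv_of_le_last (hμ : μ ≤ 0) (hx : Antitone x) {y : ℝ} (hy : y ≤ x N) :
    worstCaseDeriv L μ U N x y = L * (y - x N) + U := by
  have hsum : ∑ i ∈ range N, notch μ L (x (i + 1)) (x i) y = 0 :=
    sum_eq_zero fun i hi => notch_of_le hμ (hy.trans (hx (mem_range.1 hi)))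
  rw [worstCaseDeriv, hsum, min_eq_left (by linarith),
    max_eq_right (by linarith [hx (Nat.zero_le N)])]
  ring

lemma worstCaseDeriv_of_first_le (hL : 0 ≤ L) (hx : Antitone x) {y : ℝ} (hy : x 0 ≤ y) :
    worstCaseDeriv L μ U N x y = L * (y - x 0) + U := by
  have hsum : ∑ i ∈ range N, notch μ L (x (i + 1)) (x i) y = 0 :=
    sum_eq_zero fun i _ => notch_of_ge hL ((hx (Nat.zero_le i)).trans hy)
  rw [worstCaseDeriv, hsum, min_eq_right (by linarith [hx (Nat.zero_le N)]),
    max_eq_left (by linarith)]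
  ring

lemma worstCaseDeriv_of_mem_Icc (hμ : μ ≤ 0) (hL : 0 ≤ L) (hx : Antitone x) {i : ℕ} (hi : i < N)
    {y : ℝ} (hy : y ∈ Icc (x (i + 1)) (x i)) :
    worstCaseDeriv L μ U N x y = max (μ * (y - x (i + 1))) (L * (y - x i)) + U := by
  have hsum : ∑ j ∈ range N, notch μ L (x (j + 1)) (x j) y = notch μ L (x (i + 1)) (x i) y := by
    refine sum_eq_single_of_mem i (mem_range.2 hi) fun j _ hji => ?_
    rcases hji.lt_or_gt with hj | hj
    · exact notch_of_le hμ (hy.2.trans (hx hj))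
    · exact notch_of_ge hL ((hx hj).trans hy.1)
  rw [worstCaseDeriv, hsum, notch_of_mem_Icc hμ hL hy,
    min_eq_right (by linarith [hy.1, hx (show i + 1 ≤ N by omega)]),
    max_eq_right (by linarith [hy.2, hx (Nat.zero_le i)])]
  ring

lemma worstCaseDeriv_node (hμ : μ ≤ 0) (hL : 0 ≤ L) (hx : Antitone x) {i : ℕ} (hi : i ≤ N) :
    worstCaseDeriv L μ U N x (x i) = U := by
  rcases hi.lt_or_eq with hi | rfl
  · rw [worstCaseDeriv_of_mem_Icc hμ hL hx hi ⟨hx (Nat.le_succ i), le_rfl⟩, sub_self, mul_zero,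
      max_eq_right (mul_nonpos_of_nonpos_of_nonneg hμ (by linarith [hx (Nat.le_succ i)])),
      zero_add]
  · rw [worstCaseDeriv_of_le_last hμ hx le_rfl]
    ring

lemma worstCase_of_le_last (hμ : μ ≤ 0) (hx : Antitone x) {y : ℝ} (hy : y ≤ x N) :
    worstCase L μ U N x y =
      L / 2 * (y - x N) ^ 2 + U * (y - x N) + worstCase L μ U N x (x N) :=
  worstCase_eq_quadratic fun t ht =>
    worstCaseDeriv_of_le_last hμ hx (by rw [uIcc_of_ge hy] at ht; exact ht.2)

lemma worstCase_of_first_le (hL : 0 ≤ L) (hx : Antitone x) {y : ℝ} (hy : x 0 ≤ y) :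
    worstCase L μ U N x y =
      L / 2 * (y - x 0) ^ 2 + U * (y - x 0) + worstCase L μ U N x (x 0) :=
  worstCase_eq_quadratic fun t ht =>
    worstCaseDeriv_of_first_le hL hx (by rw [uIcc_of_le hy] at ht; exact ht.1)

variable {i : ℕ} {c : ℝ}

lemma worstCase_of_mem_Icc_left (hμ : μ ≤ 0) (hL : 0 ≤ L) (hx : Antitone x) (hi : i < N)
    (hc : c ∈ Icc (x (i + 1)) (x i)) (hcross : μ * (c - x (i + 1)) = L * (c - x i)) {y : ℝ}
    (hy : y ∈ Icc (x (i + 1)) c) :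
    worstCase L μ U N x y = μ / 2 * (y - x (i + 1)) ^ 2 + U * (y - x (i + 1)) +
      worstCase L μ U N x (x (i + 1)) := by
  refine worstCase_eq_quadratic fun t ht => ?_
  rw [uIcc_of_le hy.1] at ht
  rw [worstCaseDeriv_of_mem_Icc hμ hL hx hi ⟨ht.1, ht.2.trans (hy.2.trans hc.2)⟩,
    max_mul_sub_eq_left (by linarith) hcross (ht.2.trans hy.2)]

lemma worstCase_of_mem_Icc_right (hμ : μ ≤ 0) (hL : 0 ≤ L) (hx : Antitone x) (hi : i < N)
    (hc : c ∈ Icc (x (i + 1)) (x i)) (hcross : μ * (c - x (i + 1)) = L * (c - x i)) {y : ℝ}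
    (hy : y ∈ Icc c (x i)) :
    worstCase L μ U N x y =
      L / 2 * (y - x i) ^ 2 + U * (y - x i) + worstCase L μ U N x (x i) := by
  refine worstCase_eq_quadratic fun t ht => ?_
  rw [uIcc_of_ge hy.2] at ht
  rw [worstCaseDeriv_of_mem_Icc hμ hL hx hi ⟨hc.1.trans (hy.1.trans ht.1), ht.2⟩,
    max_mul_sub_eq_right (by linarith) hcross (hy.1.trans ht.1)]

lemma worstCase_node_sub_succ (hμ : μ ≤ 0) (hL : 0 ≤ L) (hx : Antitone x) (hi : i < N)
    (hc : c ∈ Icc (x (i + 1)) (x i)) (hcross : μ * (c - x (i + 1)) = L * (c - x i)) :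
    worstCase L μ U N x (x i) - worstCase L μ U N x (x (i + 1)) =
      μ / 2 * (c - x (i + 1)) ^ 2 + U * (c - x (i + 1)) -
        (L / 2 * (c - x i) ^ 2 + U * (c - x i)) := by
  have hleft := worstCase_of_mem_Icc_left (U := U) hμ hL hx hi hc hcross ⟨hc.1, le_rfl⟩
  have hright := worstCase_of_mem_Icc_right (U := U) hμ hL hx hi hc hcross ⟨le_rfl, hc.2⟩
  linarith

lemma worstCase_node_eq {fval c : ℕ → ℝ} (hμ : μ ≤ 0) (hL : 0 ≤ L) (hx : Antitone x)
    (hxN : x N = 0) (hfN : fval N = 0) (hc : ∀ i < N, c i ∈ Icc (x (i + 1)) (x i))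
    (hcross : ∀ i < N, μ * (c i - x (i + 1)) = L * (c i - x i))
    (hgap : ∀ i < N, μ / 2 * (c i - x (i + 1)) ^ 2 + U * (c i - x (i + 1)) -
      (L / 2 * (c i - x i) ^ 2 + U * (c i - x i)) = fval i - fval (i + 1))
    (hi : i ≤ N) : worstCase L μ U N x (x i) = fval i :=
  eq_of_sub_succ_eq (a := fun i => worstCase L μ U N x (x i)) (by rw [hxN, worstCase_zero, hfN])
    (fun i hi => by rw [worstCase_node_sub_succ hμ hL hx hi (hc i hi) (hcross i hi), hgap i hi]) hi

end WorstCase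

section ShortStep

variable {L κ U t : ℝ}

lemma shortStep_weight_pos (hκ : κ ≤ 0) (ht : t ∈ Set.Ioc (0 : ℝ) 1) :
    0 < t * (2 - t * (-κ) / (1 - κ)) := by
  have hfrac : t * (-κ) / (1 - κ) < 1 := (div_lt_one (by linarith)).2 (by nlinarith [ht.1, ht.2])
  exact mul_pos ht.1 (by linarith)

lemma shortStep_kink_mem_Icc (hL : 0 < L) (hκ : κ ≤ 0) (hU : 0 ≤ U) (ht : 0 ≤ t) (a : ℝ) :
    a + t / L * U - -κ / (1 - κ) * (t / L) * U ∈ Icc a (a + t / L * U) := by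
  have hρ0 : 0 ≤ -κ / (1 - κ) := div_nonneg (by linarith) (by linarith)
  have hρ1 : -κ / (1 - κ) ≤ 1 := (div_le_one (by linarith)).2 (by linarith)
  have hs : 0 ≤ t / L * U := by positivity
  constructor <;> nlinarith [mul_le_mul_of_nonneg_right hρ1 hs, mul_nonneg hρ0 hs]

lemma shortStep_kink_cross (hL : L ≠ 0) (hκ : κ < 1) (a : ℝ) :
    κ * L * (a + t / L * U - -κ / (1 - κ) * (t / L) * U - a) =
      L * (a + t / L * U - -κ / (1 - κ) * (t / L) * U - (a + t / L * U)) := by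
  have : 1 - κ ≠ 0 := by linarith
  field_simp
  ring

lemma shortStep_kink_gap (hL : L ≠ 0) (hκ : κ < 1) (a : ℝ) :
    κ * L / 2 * (a + t / L * U - -κ / (1 - κ) * (t / L) * U - a) ^ 2 +
        U * (a + t / L * U - -κ / (1 - κ) * (t / L) * U - a) -
      (L / 2 * (a + t / L * U - -κ / (1 - κ) * (t / L) * U - (a + t / L * U)) ^ 2 +
        U * (a + t / L * U - -κ / (1 - κ) * (t / L) * U - (a + t / L * U))) =
      U ^ 2 / (2 * L) * (t * (2 - t * (-κ) / (1 - κ))) := by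
  have : 1 - κ ≠ 0 := by linarith
  field_simp
  ring

end ShortStep

theorem stmt_15 (L Δ κ : ℝ) (μ : ℝ) (N : ℕ) (h : ℕ → ℝ)
    (hL : 0 < L) (hΔ : 0 < Δ) (hκ : κ ≤ 0) (hμ : μ = κ * L) (hN : 1 ≤ N)
    (hh : ∀ i < N, h i ∈ Set.Ioc (0:ℝ) 1)
    (U : ℝ)
    (hU : U = Real.sqrt (2 * L * Δ /
      ∑ i ∈ Finset.range N, h i * (2 - h i * (-κ) / (1 - κ))))
    (xseq fval xbar : ℕ → ℝ)
    (hx : ∀ i, xseq i = (U / L) * ∑ j ∈ Finset.Ico i N, h j)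
    (hfv : ∀ i, fval i = Δ - (U ^ 2 / (2 * L)) *
      ∑ j ∈ Finset.range i, h j * (2 - h j * (-κ) / (1 - κ)))
    (hxb : ∀ i, xbar i = xseq i - ((-κ) / (1 - κ)) * (h i / L) * U) :
    ∃ f : ℝ → ℝ,
      -- the piecewise-quadratic formulas
      (∀ y : ℝ, y ≤ xseq N →
        f y = L / 2 * (y + U / L) ^ 2 - U ^ 2 / (2 * L)) ∧
      (∀ i < N, ∀ y ∈ Set.Icc (xseq (i + 1)) (xbar i),
        f y = μ / 2 * (y - xseq (i + 1)) ^ 2 + U * (y - xseq (i + 1)) + fval (i + 1)) ∧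
      (∀ i < N, ∀ y ∈ Set.Icc (xbar i) (xseq i),
        f y = L / 2 * (y - xseq i) ^ 2 + U * (y - xseq i) + fval i) ∧
      (∀ y : ℝ, xseq 0 ≤ y →
        f y = L / 2 * (y - xseq 0) ^ 2 + U * (y - xseq 0) + fval 0) ∧
      -- regularity and interpolation
      ContDiff ℝ 1 f ∧
      (∀ i ≤ N, f (xseq i) = fval i ∧ deriv f (xseq i) = U) ∧
      -- gradient iteration
      (∀ i < N, xseq (i + 1) = xseq i - (h i / L) * deriv f (xseq i)) ∧
      -- tightness of the short-step rate
      (Finset.range (N + 1)).inf' (by simp) (fun i => (deriv f (xseq i)) ^ 2) = U ^ 2 ∧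
      U ^ 2 = 2 * L * (f (xseq 0) - f (xseq N)) /
        ∑ i ∈ Finset.range N, h i * (2 - h i * (-κ) / (1 - κ)) := by
  subst hμ
  set S := ∑ i ∈ range N, h i * (2 - h i * (-κ) / (1 - κ))
  have hS : 0 < S := sum_pos (fun i hi => shortStep_weight_pos hκ (hh i (mem_range.1 hi)))
    (nonempty_range_iff.2 (by omega))
  have hU0 : 0 ≤ U := hU ▸ Real.sqrt_nonneg _
  have hU2 : U ^ 2 = 2 * L * Δ / S := hU ▸ Real.sq_sqrt (by positivity)
  have hfvN : fval N = 0 := by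
    rw [show fval N = Δ - U ^ 2 / (2 * L) * S from hfv N, hU2]
    field_simp
    ring
  have hμ : κ * L ≤ 0 := mul_nonpos_of_nonpos_of_nonneg hκ hL.le
  have hanti : Antitone xseq := by
    rw [funext hx]
    exact (antitone_sum_Ico fun k hk => (hh k hk).1.le).const_mul (by positivity)
  have hxN : xseq N = 0 := by simp [hx]
  have hsucc : ∀ i < N, xseq i = xseq (i + 1) + h i / L * U := fun i hi => by
    rw [hx, hx, sum_eq_sum_Ico_succ_bot hi]
    ring
  have hxbar : ∀ i < N, xbar i ∈ Icc (xseq (i + 1)) (xseq i) := fun i hi => by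
    rw [hxb, hsucc i hi]
    exact shortStep_kink_mem_Icc hL hκ hU0 (hh i hi).1.le _
  have hcross : ∀ i < N, κ * L * (xbar i - xseq (i + 1)) = L * (xbar i - xseq i) := fun i hi => by
    rw [hxb, hsucc i hi]
    exact shortStep_kink_cross hL.ne' (by linarith) _
  have hnode : ∀ i ≤ N, worstCase L (κ * L) U N xseq (xseq i) = fval i := fun i =>
    worstCase_node_eq hμ hL.le hanti hxN hfvN hxbar hcross fun i hi => by
      rw [hxb, hsucc i hi, shortStep_kink_gap hL.ne' (by linarith)]
      simp only [hfv, sum_range_succ]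
      ring
  have hderiv : ∀ i ≤ N, deriv (worstCase L (κ * L) U N xseq) (xseq i) = U := fun i hi => by
    rw [deriv_worstCase, worstCaseDeriv_node hμ hL.le hanti hi]
  refine ⟨worstCase L (κ * L) U N xseq, fun y hy => ?_, fun i hi y hy => ?_, fun i hi y hy => ?_,
    fun y hy => ?_, contDiff_worstCase, fun i hi => ⟨hnode i hi, hderiv i hi⟩, fun i hi => ?_, ?_,
    ?_⟩
  · rw [worstCase_of_le_last hμ hanti hy, hxN, worstCase_zero]
    field_simp
    ring
  · rw [worstCase_of_mem_Icc_left hμ hL.le hanti hi (hxbar i hi) (hcross i hi) hy,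
      hnode (i + 1) hi]
  · rw [worstCase_of_mem_Icc_right hμ hL.le hanti hi (hxbar i hi) (hcross i hi) hy, hnode i hi.le]
  · rw [worstCase_of_first_le hL.le hanti hy, hnode 0 (Nat.zero_le N)]
  · rw [hderiv i hi.le, hsucc i hi]
    ring
  · rw [inf'_congr _ rfl fun i hi => by rw [hderiv i (Nat.lt_succ_iff.1 (mem_range.1 hi))],
      inf'_const]
  · rw [hnode 0 (Nat.zero_le N), hnode N le_rfl, hfvN, hfv, hU2]
    simp
end
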